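/- Tonks' vertex map via head-insertion: for every n ≥ 1 and every permutation π ∈ S_n, the tree φ(π) (defined recursively by splitting at the last entry: φ(π) = φ(std(π^{<π_n})) ∨ φ(std(π^{>π_n}))) equals ε(h(w(π))), the evaluation of the head-insertion encoding of the reversed permutation. -/

import Mathlib

/-- Indexed terms of the language `L^I`: generators `2^k` and partial compositions. -/
inductive Trm : Type
  | gen : ℕ → Trm
  | comp : Trm → ℕ → Trm → Trm
deriving DecidableEq

namespace Trm

/-- Arity `|A|`. -/
def arity : Trm → ℕ
  | gen _ => 2
  | comp A _ B => A.arity + B.arity - 1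

/-- Set of indices occurring in a term. -/
def ind : Trm → Finset ℕ
  | gen k => {k}
  | comp A _ B => A.ind ∪ B.ind

/-- Root index. -/
def root : Trm → ℕ
  | gen k => k
  | comp A _ _ => A.root

/-- Number of occurrences of the generator. -/
def countGen : Trm → ℕ
  | gen _ => 1
  | comp A _ B => A.countGen + B.countGen

end Trm

/-- The congruence `=_I` generated by (assoc1) and (assoc2). -/
inductive IEq : Trm → Trm → Prop
  | refl (A : Trm) : IEq A A
  | symm {A B} : IEq A B → IEq B A
  | trans {A B C} : IEq A B → IEq B C → IEq A C
  | congr {A A' B B'} (n : ℕ) : IEq A A' → IEq B B' →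
      IEq (Trm.comp A n B) (Trm.comp A' n B')
  | assoc1 (A B C : Trm) (n m : ℕ) : n ≤ m → m < n + B.arity →
      IEq (Trm.comp (Trm.comp A n B) m C) (Trm.comp A n (Trm.comp B (m - n + 1) C))
  | assoc2 (A B C : Trm) (n m : ℕ) : n + B.arity ≤ m →
      IEq (Trm.comp (Trm.comp A n B) m C) (Trm.comp (Trm.comp A (m - B.arity + 1) C) n B)

/-- Planar binary trees. -/
inductive BT : Type
  | leaf : BT
  | node : BT → BT → BT
deriving DecidableEq

namespace BT

/-- Number of leaves. -/
def leaves : BT → ℕ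
  | leaf => 1
  | node l r => l.leaves + r.leaves

/-- Graft `S` at the `i`-th leaf (1-indexed) of a tree. -/
def graft : BT → ℕ → BT → BT
  | leaf, _, S => S
  | node l r, i, S =>
    if i ≤ l.leaves then node (l.graft i S) r else node l (r.graft (i - l.leaves) S)

end BT

/-- Evaluation `ε` of indexed terms to planar binary trees. -/
def Trm.eval : Trm → BT
  | Trm.gen _ => BT.node BT.leaf BT.leaf
  | Trm.comp A i B => A.eval.graft i B.eval

/-- `l`-factors. -/
inductive LFactor : Trm → Prop
  | gen (k : ℕ) : LFactor (Trm.gen k)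
  | step {A : Trm} (j : ℕ) : LFactor A → j ∉ A.ind →
      LFactor (Trm.comp A ((A.ind.filter (· < j)).card + 1) (Trm.gen j))

/-- Auxiliary for the head-insertion encoding: `done` is the list of already
inserted letters. -/
def hAux : Trm → List ℕ → List ℕ → Trm
  | A, _, [] => A
  | A, done, y :: rest =>
      hAux (Trm.comp A ((done.filter (· < y)).length + 1) (Trm.gen y)) (done ++ [y]) rest

/-- Head-insertion encoding `h` (junk value on the empty word). -/
def hWord : List ℕ → Trm
  | [] => Trm.gen 0
  | x :: rest => hAux (Trm.gen x) [x] rest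

/-- `u_a(x)`: number of letters to the left of `x` in `a` that are greater than `x`. -/
def uCount (a : List ℕ) (x : ℕ) : ℕ := ((a.takeWhile (· ≠ x)).filter (x < ·)).length

/-- Decreasing rearrangement of a word. -/
def sortDesc (a : List ℕ) : List ℕ := (a.mergeSort (· ≤ ·)).reverse

/-- Decreasing encoding `f` (junk value on the empty word). -/
def fWord (a : List ℕ) : Trm :=
  match sortDesc a with
  | [] => Trm.gen 0
  | k :: rest => rest.foldl (fun A x => Trm.comp A (uCount a x + 1) (Trm.gen x)) (Trm.gen k)

/-- Standardization of a word of distinct integers. -/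
def std (a : List ℕ) : List ℕ := a.map (fun x => (a.filter (· ≤ x)).length)

/-- Tonks' vertex map, splitting form `φ`. -/
def tonksPhi (a : List ℕ) : BT :=
  match ha : a.getLast? with
  | none => BT.leaf
  | some x =>
      BT.node (tonksPhi (std (a.filter (· < x)))) (tonksPhi (std (a.filter (x < ·))))
termination_by a.length
decreasing_by
  · have hx : x ∈ a := List.mem_of_mem_getLast? (Option.mem_def.mpr ha)
    have : (a.filter (· < x)).length < a.length := by
      apply List.length_filter_lt_length_iff_exists.2
      exact ⟨x, hx, by simp⟩
    simp [std, -List.length_filter_lt_length_iff_exists]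
    refine lt_of_lt_of_eq ?_ List.length_attach
    exact List.length_filter_lt_length_iff_exists.2 ⟨⟨x, hx⟩, List.mem_attach _ _, by simp⟩
  · have hx : x ∈ a := List.mem_of_mem_getLast? (Option.mem_def.mpr ha)
    have : (a.filter (x < ·)).length < a.length := by
      apply List.length_filter_lt_length_iff_exists.2
      exact ⟨x, hx, by simp⟩
    simp [std, -List.length_filter_lt_length_iff_exists]
    refine lt_of_lt_of_eq ?_ List.length_attach
    exact List.length_filter_lt_length_iff_exists.2 ⟨⟨x, hx⟩, List.mem_attach _ _, by simp⟩

/-- Tonks' vertex map, head-grafting form `φ̂`. -/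
def phiHat : List ℕ → BT
  | [] => BT.leaf
  | x :: rest => (phiHat (std rest)).graft x (BT.node BT.leaf BT.leaf)
termination_by a => a.length
decreasing_by
  simp [std]

/-- The Loday–Ronco map `ψ`. -/
def lodayPsi (a : List ℕ) : BT :=
  match hm : a.maximum with
  | none => BT.leaf
  | some m =>
      let i := a.idxOf m
      BT.node (lodayPsi (std (a.take i))) (lodayPsi (std (a.drop (i + 1))))
termination_by a.length
decreasing_by
  · have hmem : m ∈ a := List.maximum_mem hm
    have hi : a.idxOf m < a.length := List.idxOf_lt_length_iff.2 hmem
    simp only [std, List.length_map, List.length_take]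
    omega
  · have : a ≠ [] := by rintro rfl; simp [List.maximum] at hm
    have : 0 < a.length := List.length_pos_iff.2 this
    simp only [std, List.length_map, List.length_drop]
    omega

/-- Inverse of a permutation word on `{1,…,n}`. -/
def invWord (π : List ℕ) : List ℕ :=
  (List.range π.length).map (fun j => π.idxOf (j + 1) + 1)

/-- One Tamari (right rotation) step, at any subtree. -/
inductive TamariStep : BT → BT → Prop
  | rot (X Y Z : BT) : TamariStep (BT.node (BT.node X Y) Z) (BT.node X (BT.node Y Z))
  | left {l l'} (r : BT) : TamariStep l l' → TamariStep (BT.node l r) (BT.node l' r)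
  | right (l : BT) {r r'} : TamariStep r r' → TamariStep (BT.node l r) (BT.node l r')

/-- The Tamari order. -/
def TamariLE : BT → BT → Prop := Relation.ReflTransGen TamariStep

/-- The strict Tamari order. -/
def TamariLT : BT → BT → Prop := Relation.TransGen TamariStep

/-- One cover of the right weak Bruhat order on words. -/
inductive BruhatStep : List ℕ → List ℕ → Prop
  | swap (α : List ℕ) {u v : ℕ} (β : List ℕ) : u < v →
      BruhatStep (α ++ u :: v :: β) (α ++ v :: u :: β)

/-- The right weak Bruhat order on words. -/
def BruhatLE : List ℕ → List ℕ → Prop := Relation.ReflTransGen BruhatStep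

/-- Head-insertion index `k(a; σ)`. -/
def kIdx (a : ℕ) (σ : List ℕ) : ℕ := 1 + (σ.filter (· < a)).length

/-!
Reading `w(π)` from the left, its first letter `x = π_n` creates the root corolla, and every
later letter `y` lands in the left subtree if `y < x` and in the right one otherwise, at the
leaf it would take when head-inserting only the letters on its own side (`hTree_node`).
Head insertion sees only the relative order of the letters, so it commutes with
standardization (`hTree_std_reverse`), and the two sides of the splitting recursion for `φ`
match by induction on the length.
-/

def hTree : BT → List ℕ → List ℕ → BT
  | T, _, [] => T
  | T, done, y :: rest =>
      hTree (T.graft ((done.filter (· < y)).length + 1) (BT.node BT.leaf BT.leaf))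
        (done ++ [y]) rest

namespace BT

lemma one_le_leaves (t : BT) : 1 ≤ t.leaves := by
  induction t with
  | leaf => exact le_rfl
  | node l r ihl ihr => simp only [leaves]; omega

lemma leaves_graft (T : BT) (i : ℕ) (S : BT) :
    (T.graft i S).leaves = T.leaves + S.leaves - 1 := by
  induction T generalizing i with
  | leaf => simp [graft, leaves]
  | node l r ihl ihr =>
    have := S.one_le_leaves
    rw [graft]
    split
    · simp only [leaves, ihl]; have := l.one_le_leaves; omega
    · simp only [leaves, ihr]; have := r.one_le_leaves; omega

lemma graft_node_of_le {l r : BT} {i : ℕ} (S : BT) (h : i ≤ l.leaves) :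
    (node l r).graft i S = node (l.graft i S) r :=
  if_pos h

lemma graft_node_of_lt {l r : BT} {i : ℕ} (S : BT) (h : l.leaves < i) :
    (node l r).graft i S = node l (r.graft (i - l.leaves) S) :=
  if_neg (Nat.not_le.2 h)

end BT

lemma eval_hAux (A : Trm) (done rest : List ℕ) :
    (hAux A done rest).eval = hTree A.eval done rest := by
  induction rest generalizing A done with
  | nil => rfl
  | cons y rest ih => exact ih _ _

lemma eval_hWord_cons (x : ℕ) (rest : List ℕ) :
    (hWord (x :: rest)).eval = hTree BT.leaf [] (x :: rest) :=
  eval_hAux _ _ _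

lemma hTree_perm {done done' : List ℕ} (h : done.Perm done') (T : BT) (rest : List ℕ) :
    hTree T done rest = hTree T done' rest := by
  induction rest generalizing T done done' with
  | nil => rfl
  | cons y rest ih =>
    simp only [hTree, (h.filter _).length_eq]
    exact ih (h.append_right [y]) _

lemma hTree_node {x : ℕ} {dl dr rest : List ℕ} (hdl : ∀ z ∈ dl, z < x)
    (hdr : ∀ z ∈ dr, x < z) (hx : x ∉ rest) {Tl : BT} (Tr : BT)
    (hTl : Tl.leaves = dl.length + 1) :
    hTree (BT.node Tl Tr) (dl ++ x :: dr) rest =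
      BT.node (hTree Tl dl (rest.filter (· < x))) (hTree Tr dr (rest.filter (x < ·))) := by
  induction rest generalizing dl dr Tl Tr with
  | nil => rfl
  | cons y rest ih =>
    obtain ⟨hyx, hx⟩ : y ≠ x ∧ x ∉ rest := by simpa [eq_comm] using hx
    rcases lt_or_gt_of_ne hyx with hlt | hgt
    · have hcount : ((dl ++ x :: dr).filter (· < y)).length = (dl.filter (· < y)).length := by
        have : dr.filter (· < y) = [] :=
          List.filter_eq_nil_iff.2 fun z hz => by
            have := hdr z hz; simp only [decide_eq_true_eq, not_lt]; omega
        simp [List.filter_append, this, Nat.not_lt.2 hlt.le]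
      have hle : (dl.filter (· < y)).length + 1 ≤ Tl.leaves := by
        have := List.length_filter_le (· < y) dl
        omega
      have hperm : (dl ++ x :: dr ++ [y]).Perm (dl ++ [y] ++ x :: dr) := by
        simpa using (List.perm_append_singleton y (x :: dr)).append_left dl
      have hdl' : ∀ z ∈ dl ++ [y], z < x := by
        simpa [or_imp, forall_and] using And.intro hdl hlt
      have hTl' : (Tl.graft ((dl.filter (· < y)).length + 1) (BT.node BT.leaf BT.leaf)).leaves =
          (dl ++ [y]).length + 1 := by
        simp [BT.leaves_graft, BT.leaves, hTl]
      rw [hTree, hcount, BT.graft_node_of_le _ hle, hTree_perm hperm, ih hdl' hdr hx _ hTl']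
      simp [hlt, Nat.not_lt.2 hlt.le, hTree]
    · have hcount : ((dl ++ x :: dr).filter (· < y)).length =
          dl.length + 1 + (dr.filter (· < y)).length := by
        have : dl.filter (· < y) = dl :=
          List.filter_eq_self.2 fun z hz => by
            have := hdl z hz; simp only [decide_eq_true_eq]; omega
        simp only [List.filter_append, this, hgt, decide_true, List.filter_cons_of_pos,
          List.length_append, List.length_cons]
        omega
      have hdr' : ∀ z ∈ dr ++ [y], x < z := by
        simpa [or_imp, forall_and] using And.intro hdr hgt
      have hidx : dl.length + 1 + (dr.filter (· < y)).length + 1 - Tl.leaves =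
          (dr.filter (· < y)).length + 1 := by
        omega
      rw [hTree, hcount, BT.graft_node_of_lt _ (by omega), hidx,
        show dl ++ x :: dr ++ [y] = dl ++ x :: (dr ++ [y]) by simp, ih hdl hdr' hx _ hTl]
      simp [hgt, Nat.not_lt.2 hgt.le, hTree]

lemma hTree_map_of_strictMonoOn {g : ℕ → ℕ} {done rest : List ℕ}
    (hg : StrictMonoOn g {z | z ∈ done ++ rest}) (T : BT) :
    hTree T (done.map g) (rest.map g) = hTree T done rest := by
  induction rest generalizing done T with
  | nil => rfl
  | cons y rest ih =>
    have hcount : ((done.map g).filter (· < g y)).length = (done.filter (· < y)).length := by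
      rw [List.filter_map, List.length_map]
      congr 1
      exact List.filter_congr fun z hz => by
        simp [hg.lt_iff_lt (a := z) (b := y) (by simp [hz]) (by simp)]
    rw [List.map_cons, hTree, hTree, hcount,
      show done.map g ++ [g y] = (done ++ [y]).map g by simp]
    exact ih (by simpa using hg) _

lemma strictMonoOn_std_rank (a : List ℕ) :
    StrictMonoOn (fun x => (a.filter (· ≤ x)).length) {x | x ∈ a} := by
  intro u _ v hv huv
  have hsub : (a.filter (· ≤ v)).filter (· ≤ u) = a.filter (· ≤ u) := by
    rw [List.filter_filter]
    exact List.filter_congr fun z _ => by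
      simp only [Bool.and_eq_left_iff_imp, decide_eq_true_eq]; omega
  simp only [← hsub]
  exact List.length_filter_lt_length_iff_exists.2 ⟨v, by simpa using hv, by simpa using huv⟩

lemma length_std (a : List ℕ) : (std a).length = a.length := List.length_map _

lemma nodup_std {a : List ℕ} (h : a.Nodup) : (std a).Nodup :=
  h.map_on (strictMonoOn_std_rank a).injOn

lemma hTree_std_reverse (a : List ℕ) (T : BT) :
    hTree T [] (std a).reverse = hTree T [] a.reverse := by
  rw [std, ← List.map_reverse]
  exact hTree_map_of_strictMonoOn (done := []) (by simpa using strictMonoOn_std_rank a) T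

lemma tonksPhi_nil : tonksPhi [] = BT.leaf := by
  rw [tonksPhi]; rfl

lemma tonksPhi_concat (a : List ℕ) (x : ℕ) :
    tonksPhi (a ++ [x]) = BT.node (tonksPhi (std (a.filter (· < x))))
      (tonksPhi (std (a.filter (x < ·)))) := by
  rw [tonksPhi]
  split
  · simp_all
  · rename_i y h
    obtain rfl : x = y := by simpa using h
    simp [List.filter_append]

theorem tonksPhi_eq_hTree {a : List ℕ} (ha : a.Nodup) :
    tonksPhi a = hTree BT.leaf [] a.reverse := by
  induction hlen : a.length using Nat.strong_induction_on generalizing a with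
  | _ n ih =>
    rcases a.eq_nil_or_concat' with rfl | ⟨a, x, rfl⟩
    · exact tonksPhi_nil
    obtain ⟨hx, ha⟩ := (List.nodup_concat a x).1 (by simpa using ha)
    have hsplit (p : ℕ → Bool) :
        tonksPhi (std (a.filter p)) = hTree BT.leaf [] (a.filter p).reverse := by
      have hlt : (std (a.filter p)).length < n := by
        simpa [length_std, ← hlen] using Nat.lt_succ_of_le (List.length_filter_le p a)
      rw [ih _ hlt (nodup_std (ha.filter p)) rfl, hTree_std_reverse]
    calc tonksPhi (a ++ [x])
        = BT.node (hTree BT.leaf [] (a.reverse.filter (· < x)))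
            (hTree BT.leaf [] (a.reverse.filter (x < ·))) := by
          rw [tonksPhi_concat, hsplit, hsplit, List.filter_reverse, List.filter_reverse]
      _ = hTree (BT.node BT.leaf BT.leaf) ([] ++ x :: []) a.reverse :=
          (hTree_node (by simp) (by simp) (by simpa using hx) _ rfl).symm
      _ = hTree BT.leaf [] (a ++ [x]).reverse := by simp [hTree, BT.graft]

theorem tonksPhi_via_h (n : ℕ) (hn : 1 ≤ n) (π : List ℕ)
    (hperm : π.Perm (List.range' 1 n)) :
    tonksPhi π = (hWord π.reverse).eval := by
  have hne : π.reverse ≠ [] := by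
    rw [Ne, List.reverse_eq_nil_iff, ← List.length_eq_zero_iff, hperm.length_eq,
      List.length_range']
    omega
  obtain ⟨x, rest, hrev⟩ := List.exists_cons_of_ne_nil hne
  rw [tonksPhi_eq_hTree (hperm.nodup_iff.2 List.nodup_range'), hrev, eval_hWord_cons]
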